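/- arXiv:2003.00438 — 2 statements merged into one kernel-verified Lean document; each statement's English description precedes it below -/
import Mathlib

section
/- Let γ : ℝ → ℝ² (Euclidean plane) be a continuously differentiable curve parametrized by arc length on [0, L], i.e., ‖γ'(s)‖ = 1 for all s ∈ [0, L], where L > 0. Then (1/4) ∫_{-π}^{π} ( ∫_0^L |⟨γ'(s), (cos p, sin p)⟩| ds ) dp = L. That is, the length of the curve equals one quarter of the integral over all directions p of the total absolute projection A(p) of its length elements onto the direction p. -/
/-
Fubini exchanges the two integrations, so it suffices to integrate over all directions for a fixed
unit tangent vector `v`. Writing `v = (cos θ, sin θ)`, the projection `⟪v, (cos p, sin p)⟫` is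
`cos (p - θ)`, and `|cos|` integrates to `4` over any period.
-/

open Real RealInnerProductSpace MeasureTheory

lemma periodic_abs_cos : Function.Periodic (fun x => |cos x|) π := fun x => by
  simp [cos_add_pi]

lemma integral_abs_cos_neg_pi_div_two_pi_div_two : ∫ x in (-(π / 2))..(π / 2), |cos x| = 2 := by
  rw [intervalIntegral.integral_congr (g := cos), integral_cos]
  · rw [sin_neg, sin_pi_div_two]
    norm_num
  · intro x hx
    rw [Set.uIcc_of_le (by linarith [pi_pos])] at hx
    exact abs_of_nonneg (cos_nonneg_of_mem_Icc hx)

lemma integral_abs_cos_add_two_pi (t : ℝ) : ∫ x in t..t + 2 * π, |cos x| = 4 := by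
  have h := periodic_abs_cos.intervalIntegral_add_zsmul_eq 2 t
    (fun _ _ => continuous_cos.abs.intervalIntegrable _ _)
  rw [periodic_abs_cos.intervalIntegral_add_eq t (-(π / 2)), show -(π / 2) + π = π / 2 by ring,
    integral_abs_cos_neg_pi_div_two_pi_div_two, show (2 : ℤ) • π = 2 * π by simp] at h
  rw [h]
  norm_num

lemma integral_abs_cos_sub (θ : ℝ) : ∫ p in (-π)..π, |cos (p - θ)| = 4 := by
  rw [intervalIntegral.integral_comp_sub_right (fun x => |cos x|) θ,
    show π - θ = -π - θ + 2 * π by ring, integral_abs_cos_add_two_pi]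

lemma integral_abs_mul_cos_add_mul_sin (a b : ℝ) :
    ∫ p in (-π)..π, |a * cos p + b * sin p| = 4 * √(a ^ 2 + b ^ 2) := by
  set z : ℂ := ⟨a, b⟩
  have hre : ‖z‖ * cos z.arg = a := Complex.norm_mul_cos_arg z
  have him : ‖z‖ * sin z.arg = b := Complex.norm_mul_sin_arg z
  have hz (p : ℝ) : a * cos p + b * sin p = ‖z‖ * cos (p - z.arg) := by
    rw [cos_sub]
    linear_combination -cos p * hre - sin p * him
  simp_rw [hz, abs_mul, abs_norm, intervalIntegral.integral_const_mul, integral_abs_cos_sub,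
    Complex.norm_eq_sqrt_sq_add_sq]
  ring

lemma EuclideanSpace.integral_abs_inner_cos_sin (v : EuclideanSpace ℝ (Fin 2)) :
    ∫ p in (-π)..π, |⟪v, (WithLp.toLp 2 ![cos p, sin p] : EuclideanSpace ℝ (Fin 2))⟫| =
      4 * ‖v‖ := by
  simp only [PiLp.inner_apply, Fin.sum_univ_two, EuclideanSpace.norm_eq, Real.norm_eq_abs,
    sq_abs, Matrix.cons_val_zero, Matrix.cons_val_one, Matrix.cons_val_fin_one,
    RCLike.inner_apply, conj_trivial]
  rw [← integral_abs_mul_cos_add_mul_sin]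
  simp only [mul_comm]

lemma intervalIntegral_integral_swap_of_bounded {E : Type*} [NormedAddCommGroup E]
    [NormedSpace ℝ E] {f : ℝ → ℝ → E} (hf : AEStronglyMeasurable (Function.uncurry f))
    {a b c d M : ℝ} (hab : a ≤ b) (hcd : c ≤ d)
    (hM : ∀ x ∈ Set.Icc a b, ∀ y ∈ Set.Icc c d, ‖f x y‖ ≤ M) :
    ∫ x in a..b, ∫ y in c..d, f x y = ∫ y in c..d, ∫ x in a..b, f x y := by
  simp only [intervalIntegral.integral_of_le hab, intervalIntegral.integral_of_le hcd]
  refine integral_integral_swap ?_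
  rw [Measure.prod_restrict, ← Measure.volume_eq_prod]
  refine Measure.integrableOn_of_bounded ?_ hf
    (ae_restrict_of_forall_mem (measurableSet_Ioc.prod measurableSet_Ioc) fun z hz =>
      hM _ (Set.Ioc_subset_Icc_self hz.1) _ (Set.Ioc_subset_Icc_self hz.2))
  simp [Measure.volume_eq_prod, Measure.prod_prod, ENNReal.mul_eq_top]

theorem cauchy_crofton_curve_general (γ : ℝ → EuclideanSpace ℝ (Fin 2)) (L : ℝ)
    (hL : 0 < L)
    (hunit : ∀ s ∈ Set.Icc (0 : ℝ) L, ‖deriv γ s‖ = 1) :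
    (1 / 4) * (∫ p in (-Real.pi)..Real.pi,
        ∫ s in (0 : ℝ)..L,
          |⟪deriv γ s, (WithLp.toLp 2 ![Real.cos p, Real.sin p] : EuclideanSpace ℝ (Fin 2))⟫|)
      = L := by
  have hmeas : AEStronglyMeasurable (Function.uncurry fun p s =>
      |⟪deriv γ s, (WithLp.toLp 2 ![cos p, sin p] : EuclideanSpace ℝ (Fin 2))⟫|) :=
    (((measurable_deriv γ).comp measurable_snd).inner (by fun_prop)).abs.aestronglyMeasurable
  have hbound : ∀ p ∈ Set.Icc (-π) π, ∀ s ∈ Set.Icc 0 L,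
      ‖|⟪deriv γ s, (WithLp.toLp 2 ![cos p, sin p] : EuclideanSpace ℝ (Fin 2))⟫|‖ ≤ 1 := by
    intro p _ s hs
    simpa [hunit s hs, EuclideanSpace.norm_eq] using
      abs_real_inner_le_norm (deriv γ s) (WithLp.toLp 2 ![cos p, sin p])
  rw [intervalIntegral_integral_swap_of_bounded hmeas (by linarith [pi_pos]) hL.le hbound,
    intervalIntegral.integral_congr (g := fun _ => 4) fun s hs => by
      rw [Set.uIcc_of_le hL.le] at hs
      simp only [EuclideanSpace.integral_abs_inner_cos_sin, hunit s hs, mul_one]]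
  simp only [intervalIntegral.integral_const, sub_zero, smul_eq_mul]
  ring

theorem cauchy_crofton_curve (γ : ℝ → EuclideanSpace ℝ (Fin 2)) (L : ℝ)
    (hL : 0 < L) (hγ : ContDiff ℝ 1 γ)
    (hunit : ∀ s ∈ Set.Icc (0 : ℝ) L, ‖deriv γ s‖ = 1) :
    (1 / 4) * (∫ p in (-Real.pi)..Real.pi,
        ∫ s in (0 : ℝ)..L,
          |⟪deriv γ s, (WithLp.toLp 2 ![Real.cos p, Real.sin p] : EuclideanSpace ℝ (Fin 2))⟫|)
      = L :=
  cauchy_crofton_curve_general γ L hL hunit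
end

section
/- For every natural number n ≥ 1 and every real θ, letting M = (1/n) · Σ_{k=0}^{n-1} |cos(θ + kπ/n)| be the average over n equally spaced directions of the absolute projection of a unit segment with direction angle θ, one has |(π/2)·M − 1| ≤ π²/(8n²). -/
open Real Finset

/-! The sum `∑ |cos (θ + kπ/n)|` is `π/n`-periodic in `θ`, so `θ` may be moved into
`[-π/2, -π/2 + π/n)`, where all the cosines are nonnegative. There the sum telescopes after
multiplication by `sin (π/2n)` and equals `sin u / sin (π/2n)` with `|u - π/2| ≤ π/2n`.
Writing `x = π/2n`, the normalized mean is `x sin u / sin x`, and `cos x ≤ sin u ≤ 1`,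
`x - x³/6 ≤ sin x ≤ x`, `1 - x²/2 ≤ cos x` put it within `x²/2` of `1`. -/

theorem Function.Periodic.sum_range_add_mul_div {M : Type*} [AddCancelCommMonoid M]
    {f : ℝ → M} {c : ℝ} (hf : Function.Periodic f c) {n : ℕ} (hn : n ≠ 0) :
    Function.Periodic (fun θ => ∑ k ∈ range n, f (θ + k * c / n)) (c / n) := by
  intro θ
  have hshift (k : ℕ) : θ + c / n + k * c / n = θ + (k + 1 : ℕ) * c / n := by
    push_cast; ring
  have hfull : f (θ + n * c / n) = f (θ + (0 : ℕ) * c / n) := by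
    rw [mul_div_cancel_left₀ _ (Nat.cast_ne_zero.2 hn)]
    simpa using hf θ
  have hsplit := (sum_range_succ' (fun k : ℕ => f (θ + k * c / n)) n).symm.trans
    (sum_range_succ _ n)
  simp only [hshift]
  rw [← hfull] at hsplit
  exact add_right_cancel hsplit

theorem abs_cos_periodic : Function.Periodic (fun t => |cos t|) π := fun t => by
  simp only [cos_add_pi, abs_neg]

theorem two_mul_sin_mul_sum_range_cos (ψ d : ℝ) (K : ℕ) :
    2 * sin (d / 2) * ∑ k ∈ range K, cos (ψ + k * d) =
      sin (ψ + (K - 1 / 2) * d) - sin (ψ - d / 2) := by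
  induction K with
  | zero => simp only [range_zero, sum_empty, mul_zero, CharP.cast_eq_zero]; ring_nf
  | succ K ih =>
    have step : sin (ψ + (K + 1 / 2) * d) - sin (ψ + (K - 1 / 2) * d) =
        2 * sin (d / 2) * cos (ψ + K * d) := by
      rw [sin_sub_sin]; ring_nf
    rw [sum_range_succ, mul_add, ih, ← step]
    push_cast
    ring_nf

theorem sin_mul_sum_range_cos_add_mul_pi_div (ψ : ℝ) {n : ℕ} (hn : n ≠ 0) :
    sin (π / (2 * n)) * ∑ k ∈ range n, cos (ψ + k * π / n) = sin (π / (2 * n) - ψ) := by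
  have htele := two_mul_sin_mul_sum_range_cos ψ (π / n) n
  have hn' : (n : ℝ) ≠ 0 := Nat.cast_ne_zero.2 hn
  have hlast : ψ + (n - 1 / 2) * (π / n) = (ψ - π / n / 2) + π := by field_simp; ring
  have hodd : sin (ψ - π / n / 2) = -sin (π / n / 2 - ψ) := by rw [← sin_neg, neg_sub]
  rw [hlast, sin_add_pi, hodd, div_div, mul_comm (n : ℝ) 2] at htele
  simp_rw [mul_div_assoc]
  linarith

theorem sum_range_abs_cos_eq_sum_cos {n : ℕ} {ψ : ℝ} (h₁ : -(π / 2) ≤ ψ)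
    (h₂ : ψ ≤ -(π / 2) + π / n) :
    ∑ k ∈ range n, |cos (ψ + k * π / n)| = ∑ k ∈ range n, cos (ψ + k * π / n) := by
  refine sum_congr rfl fun k hk => abs_of_nonneg (cos_nonneg_of_mem_Icc ⟨?_, ?_⟩)
  · have : 0 ≤ k * π / n := by positivity
    linarith
  · have hk : (k : ℝ) + 1 ≤ n := by exact_mod_cast mem_range.1 hk
    have hn : (0 : ℝ) < n := by linarith [k.cast_nonneg (α := ℝ)]
    have : (k + 1) * π / n ≤ π := by
      rw [div_le_iff₀ hn]; nlinarith [pi_pos]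
    rw [add_mul, add_div, one_mul] at this
    linarith

theorem exists_sin_eq_sin_mul_sum_range_abs_cos {n : ℕ} (hn : n ≠ 0) (θ : ℝ) :
    ∃ u, |u - π / 2| ≤ π / (2 * n) ∧
      sin (π / (2 * n)) * ∑ k ∈ range n, |cos (θ + k * π / n)| = sin u := by
  have hp : 0 < π / n := by positivity
  have hψ := toIcoMod_mem_Ico hp (-(π / 2)) θ
  set ψ := toIcoMod hp (-(π / 2)) θ with hψ_def
  have hx : π / (2 * n) = π / n / 2 := by rw [div_div, mul_comm]
  refine ⟨π / (2 * n) - ψ, ?_, ?_⟩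
  · rw [abs_le, hx]
    constructor <;> linarith [hψ.1, hψ.2]
  · have hper := (abs_cos_periodic.sum_range_add_mul_div hn).sub_zsmul_eq
      (toIcoDiv hp (-(π / 2)) θ) (x := θ)
    rw [← hper, ← toIcoMod, ← hψ_def, sum_range_abs_cos_eq_sum_cos hψ.1 hψ.2.le,
      sin_mul_sum_range_cos_add_mul_pi_div ψ hn]

theorem cos_le_sin_of_abs_sub_pi_div_two_le {x u : ℝ} (hx : x ≤ π) (hu : |u - π / 2| ≤ x) :
    cos x ≤ sin u := by
  rw [← cos_pi_div_two_sub, ← cos_abs (π / 2 - u)]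
  exact cos_le_cos_of_nonneg_of_le_pi (abs_nonneg _) hx (by rwa [abs_sub_comm])

theorem le_sin_mul_one_add_sq_div_two {x : ℝ} (h₀ : 0 ≤ x) (h₂ : x ≤ 2) :
    x ≤ sin x * (1 + x ^ 2 / 2) := by
  nlinarith [mul_le_mul_of_nonneg_right (sin_ge_sub_cube h₀)
    (by positivity : (0 : ℝ) ≤ 1 + x ^ 2 / 2),
    mul_nonneg (pow_nonneg h₀ 3) (by nlinarith : 0 ≤ 4 - x ^ 2)]

theorem one_sub_sq_div_two_mul_sin_le_mul_cos {x : ℝ} (h₀ : 0 ≤ x) (h : x ≤ π / 2) :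
    (1 - x ^ 2 / 2) * sin x ≤ x * cos x := by
  have hcos : 0 ≤ cos x := cos_nonneg_of_mem_Icc ⟨by linarith [pi_pos], h⟩
  rcases le_or_gt (1 - x ^ 2 / 2) 0 with hneg | hpos
  · nlinarith [sin_nonneg_of_nonneg_of_le_pi h₀ (by linarith [pi_pos])]
  · calc (1 - x ^ 2 / 2) * sin x ≤ (1 - x ^ 2 / 2) * x := by gcongr; exact sin_le h₀
      _ ≤ cos x * x := by gcongr; exact one_sub_sq_div_two_le_cos
      _ = x * cos x := mul_comm _ _

theorem abs_mul_sin_div_sin_sub_one_le {x u : ℝ} (hx₀ : 0 < x) (hx : x ≤ π / 2)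
    (hu : |u - π / 2| ≤ x) : |x * sin u / sin x - 1| ≤ x ^ 2 / 2 := by
  have hsin : 0 < sin x := sin_pos_of_pos_of_lt_pi hx₀ (by linarith [pi_pos])
  have hcos : cos x ≤ sin u := cos_le_sin_of_abs_sub_pi_div_two_le (by linarith [pi_pos]) hu
  rw [abs_le]
  constructor
  · have : 1 - x ^ 2 / 2 ≤ x * sin u / sin x := by
      rw [le_div_iff₀ hsin]
      nlinarith [one_sub_sq_div_two_mul_sin_le_mul_cos hx₀.le hx]
    linarith
  · rw [sub_le_iff_le_add, div_le_iff₀ hsin]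
    nlinarith [le_sin_mul_one_add_sq_div_two hx₀.le (by linarith [pi_le_four]), sin_le_one u]

theorem cauchy_theoreme_II_error_bound (n : ℕ) (hn : 1 ≤ n) (θ : ℝ) :
    |Real.pi / 2 *
        ((1 / n) * ∑ k ∈ Finset.range n, |Real.cos (θ + k * Real.pi / n)|) - 1|
      ≤ Real.pi ^ 2 / (8 * n ^ 2) := by
  have hn₀ : n ≠ 0 := by omega
  obtain ⟨u, hu, hsum⟩ := exists_sin_eq_sin_mul_sum_range_abs_cos hn₀ θ
  have hx₀ : 0 < π / (2 * n) := by positivity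
  have hx : π / (2 * n) ≤ π / 2 :=
    div_le_div_of_nonneg_left pi_pos.le two_pos (by norm_cast; omega)
  have hsin : sin (π / (2 * n)) ≠ 0 := (sin_pos_of_pos_of_lt_pi hx₀ (by linarith)).ne'
  have key := abs_mul_sin_div_sin_sub_one_le hx₀ hx hu
  rw [← hsum, ← mul_assoc, mul_comm _ (sin _), mul_assoc, mul_div_cancel_left₀ _ hsin] at key
  have hmean : π / 2 * (1 / n * ∑ k ∈ range n, |cos (θ + k * π / n)|) =
      π / (2 * n) * ∑ k ∈ range n, |cos (θ + k * π / n)| := by ring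
  have hbound : π ^ 2 / (8 * n ^ 2) = (π / (2 * n)) ^ 2 / 2 := by ring
  rwa [hmean, hbound]
end
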